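/- arXiv:2304.08033 — 2 statements merged into one kernel-verified Lean document; each statement's English description precedes it below -/
import Mathlib

section
/- For a d-tuple of bounded linear operators T = (T_1,...,T_d) on a complex Hilbert space, (1/d)·w_e(T²) ≤ w_e(T)², where T² = (T_1²,...,T_d²). -/
open scoped ComplexConjugate

noncomputable def jnorm {H : Type*} [NormedAddCommGroup H] [InnerProductSpace ℂ H]
    {d : ℕ} (T : Fin d → H →L[ℂ] H) : ℝ :=
  sSup {r | ∃ x : H, ‖x‖ = 1 ∧ r = Real.sqrt (∑ k, ‖T k x‖ ^ 2)}

noncomputable def we {H : Type*} [NormedAddCommGroup H] [InnerProductSpace ℂ H]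
    {d : ℕ} (T : Fin d → H →L[ℂ] H) : ℝ :=
  sSup {r | ∃ x : H, ‖x‖ = 1 ∧ r = Real.sqrt (∑ k, ‖(inner ℂ (T k x) x : ℂ)‖ ^ 2)}

section lemmas
variable {H : Type*} [NormedAddCommGroup H] [InnerProductSpace ℂ H] {d : ℕ}

lemma we_bdd (T : Fin d → H →L[ℂ] H) :
    BddAbove {r | ∃ x : H, ‖x‖ = 1 ∧ r = Real.sqrt (∑ k, ‖(inner ℂ (T k x) x : ℂ)‖ ^ 2)} := by
  refine ⟨Real.sqrt (∑ k, ‖T k‖ ^ 2), ?_⟩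
  rintro r ⟨x, hx, rfl⟩
  apply Real.sqrt_le_sqrt
  apply Finset.sum_le_sum
  intro k _
  have h1 : ‖(inner ℂ (T k x) x : ℂ)‖ ≤ ‖T k x‖ * ‖x‖ := norm_inner_le_norm _ _
  have h2 : ‖T k x‖ ≤ ‖T k‖ * ‖x‖ := (T k).le_opNorm x
  rw [hx] at h1 h2
  simp only [mul_one] at h1 h2
  exact pow_le_pow_left₀ (norm_nonneg _) (h1.trans h2) 2

lemma we_nonneg (T : Fin d → H →L[ℂ] H) : 0 ≤ we T :=
  Real.sSup_nonneg (by rintro r ⟨x, hx, rfl⟩; exact Real.sqrt_nonneg _)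

lemma inner_le_we (T : Fin d → H →L[ℂ] H) (k : Fin d) (y : H) :
    ‖(inner ℂ (T k y) y : ℂ)‖ ≤ we T * ‖y‖ ^ 2 := by
  rcases eq_or_ne y 0 with rfl | hy
  · simp
  · have hny : (0:ℝ) < ‖y‖ := norm_pos_iff.mpr hy
    set c : ℂ := (‖y‖ : ℂ)⁻¹ with hc
    set z : H := c • y with hz
    have hcz : ‖c‖ = ‖y‖⁻¹ := by
      simp [hc, abs_of_pos hny]
    have hz1 : ‖z‖ = 1 := by
      rw [hz, norm_smul, hcz, inv_mul_cancel₀ hny.ne']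
    have key : ∀ j : Fin d, ‖(inner ℂ (T j z) z : ℂ)‖ ≤ we T := by
      intro j
      have h1 : ‖(inner ℂ (T j z) z : ℂ)‖ ≤ Real.sqrt (∑ i, ‖(inner ℂ (T i z) z : ℂ)‖ ^ 2) := by
        rw [show ‖(inner ℂ (T j z) z : ℂ)‖ = Real.sqrt (‖(inner ℂ (T j z) z : ℂ)‖ ^ 2) by
          rw [Real.sqrt_sq (norm_nonneg _)]]
        exact Real.sqrt_le_sqrt (Finset.single_le_sum (f := fun i => ‖(inner ℂ (T i z) z : ℂ)‖ ^ 2)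
          (fun i _ => sq_nonneg _) (Finset.mem_univ j))
      exact h1.trans (le_csSup (we_bdd T) ⟨z, hz1, rfl⟩)
    have hTz : T k z = c • T k y := by rw [hz, map_smul]
    have hinner : (inner ℂ (T k z) z : ℂ) = conj c * c * inner ℂ (T k y) y := by
      rw [hTz, hz, inner_smul_left, inner_smul_right]; ring
    have hnorm : ‖(inner ℂ (T k z) z : ℂ)‖ = ‖y‖⁻¹ * ‖y‖⁻¹ * ‖(inner ℂ (T k y) y : ℂ)‖ := by
      rw [hinner, norm_mul, norm_mul, RCLike.norm_conj, hcz]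
    have := key k
    rw [hnorm] at this
    have h2 := mul_le_mul_of_nonneg_right this (sq_nonneg ‖y‖)
    have heq : ‖y‖⁻¹ * ‖y‖⁻¹ * ‖(inner ℂ (T k y) y : ℂ)‖ * ‖y‖ ^ 2 = ‖(inner ℂ (T k y) y : ℂ)‖ := by
      rw [sq]
      field_simp
    linarith [h2, heq.symm.le, heq.le]

end lemmas

section core
variable {H : Type*} [NormedAddCommGroup H] [InnerProductSpace ℂ H] {d : ℕ}

lemma core (T : Fin d → H →L[ℂ] H) (k : Fin d) (x : H) (hx : ‖x‖ = 1) :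
    ‖(inner ℂ ((T k) ((T k) x)) x : ℂ)‖ ≤ (we T) ^ 2 := by
  set A := T k with hA
  set w := we T with hw
  have hw0 : 0 ≤ w := we_nonneg T
  set c : ℂ := inner ℂ (A (A x)) x with hc
  by_cases h0 : A x = 0
  · have hc0 : c = 0 := by rw [hc, h0, map_zero, inner_zero_left]
    rw [hc0]; simpa using sq_nonneg w
  by_cases hc0 : c = 0
  · rw [hc0]; simpa using sq_nonneg w
  set s : ℝ := ‖A x‖ with hs
  have hs0 : 0 < s := norm_pos_iff.mpr h0
  -- find unit u with conj (u^2) * c = ‖c‖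
  obtain ⟨u, hu2⟩ := IsAlgClosed.exists_pow_nat_eq ((‖c‖ : ℂ) / conj c) (n := 2) (by norm_num)
  have hu1 : ‖u‖ = 1 := by
    have h1 : ‖u‖ ^ 2 = 1 := by
      rw [← norm_pow, hu2, norm_div, RCLike.norm_conj, Complex.norm_real, Real.norm_of_nonneg
        (norm_nonneg c), div_self (norm_ne_zero_iff.mpr hc0)]
    nlinarith [norm_nonneg u]
  have huc : conj (u ^ 2) * c = (‖c‖ : ℂ) := by
    rw [hu2, map_div₀, Complex.conj_conj, Complex.conj_ofReal, div_mul_cancel₀ _ hc0]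
  set a : ℂ := ((s⁻¹ : ℝ) : ℂ) * u with ha
  have hselfAx : (inner ℂ (A x) (A x) : ℂ) = ((s : ℝ) : ℂ) ^ 2 := by
    rw [inner_self_eq_norm_sq_to_K, ← hs]
    norm_cast
  set yp : H := x + a • (A x) with hyp
  set ym : H := x - a • (A x) with hym
  have hkey : (inner ℂ (A yp) yp : ℂ) - inner ℂ (A ym) ym
      = 2 * a * ((s : ℝ) : ℂ) ^ 2 + 2 * conj a * c := by
    simp only [hyp, hym, map_add, map_sub, map_smul, inner_add_left, inner_add_right,
      inner_sub_left, inner_sub_right, inner_smul_left, inner_smul_right, hselfAx, ← hc]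
    ring
  have hconja : conj a = ((s⁻¹ : ℝ) : ℂ) * conj u := by
    rw [ha, map_mul, Complex.conj_ofReal]
  have h2 : conj u * u = 1 := by
    rw [RCLike.conj_mul, hu1]; norm_num
  have hmul : conj u * ((inner ℂ (A yp) yp : ℂ) - inner ℂ (A ym) ym)
      = ((2 * s + 2 * ‖c‖ / s : ℝ) : ℂ) := by
    rw [hkey]
    have hcu2 : conj (u ^ 2) = conj u * conj u := by rw [map_pow, sq]
    calc conj u * (2 * a * ((s : ℝ) : ℂ) ^ 2 + 2 * conj a * c)
        = 2 * ((s⁻¹ : ℝ) : ℂ) * (conj u * u) * ((s : ℝ) : ℂ) ^ 2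
          + 2 * ((s⁻¹ : ℝ) : ℂ) * (conj (u ^ 2) * c) := by
          rw [ha, hconja, hcu2]; ring
      _ = ((2 * s + 2 * ‖c‖ / s : ℝ) : ℂ) := by
          have hsC : ((s : ℝ) : ℂ) ≠ 0 := by exact_mod_cast hs0.ne'
          rw [h2, huc]
          push_cast
          field_simp
  have hre : (conj u * (inner ℂ (A yp) yp : ℂ)).re - (conj u * (inner ℂ (A ym) ym : ℂ)).re
      = 2 * s + 2 * ‖c‖ / s := by
    have := congrArg Complex.re hmul
    rw [mul_sub] at this
    simpa using this
  have hb : ∀ z : H, |(conj u * (inner ℂ (A z) z : ℂ)).re| ≤ w * ‖z‖ ^ 2 := by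
    intro z
    refine (Complex.abs_re_le_norm _).trans ?_
    rw [norm_mul, RCLike.norm_conj, hu1, one_mul]
    exact inner_le_we T k z
  have hpar : ‖yp‖ ^ 2 + ‖ym‖ ^ 2 = 4 := by
    have hp := parallelogram_law_with_norm ℂ x (a • (A x))
    have hna : ‖a • (A x)‖ = 1 := by
      rw [norm_smul, ha, norm_mul, Complex.norm_real, hu1, mul_one,
        Real.norm_of_nonneg (inv_nonneg.mpr hs0.le), ← hs, inv_mul_cancel₀ hs0.ne']
    rw [hyp, hym, hp, hna, hx]
    norm_num
  have hineq : 2 * s + 2 * ‖c‖ / s ≤ 4 * w := by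
    have h1 := abs_le.mp (hb yp)
    have h2 := abs_le.mp (hb ym)
    nlinarith [hre, hpar, h1.1, h1.2, h2.1, h2.2]
  have hclear : 2 * s ^ 2 + 2 * ‖c‖ ≤ 4 * w * s := by
    have h' := mul_le_mul_of_nonneg_right hineq hs0.le
    have heq : (2 * s + 2 * ‖c‖ / s) * s = 2 * s ^ 2 + 2 * ‖c‖ := by
      field_simp
    linarith [heq ▸ h']
  nlinarith [sq_nonneg (w - s)]

end core

theorem stmt2 {H : Type*} [NormedAddCommGroup H] [InnerProductSpace ℂ H] {d : ℕ} (T : Fin d → H →L[ℂ] H) :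
    (1 / d : ℝ) * we (fun k => (T k) ^ 2) ≤ (we T) ^ 2 := by
  have hw0 : 0 ≤ we T := we_nonneg T
  have hle : we (fun k => (T k) ^ 2) ≤ d * (we T) ^ 2 := by
    apply Real.sSup_le
    · rintro r ⟨x, hx, rfl⟩
      have hib : ∀ k : Fin d, ‖(inner ℂ (((T k) ^ 2) x) x : ℂ)‖ ^ 2 ≤ ((we T) ^ 2) ^ 2 := by
        intro k
        have h := core T k x hx
        rw [sq (T k), ContinuousLinearMap.mul_apply]
        exact pow_le_pow_left₀ (norm_nonneg _) h 2
      calc Real.sqrt (∑ k, ‖(inner ℂ (((T k) ^ 2) x) x : ℂ)‖ ^ 2)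
          ≤ Real.sqrt (∑ _k : Fin d, ((we T) ^ 2) ^ 2) :=
            Real.sqrt_le_sqrt (Finset.sum_le_sum fun k _ => hib k)
        _ = Real.sqrt (d * ((we T) ^ 2) ^ 2) := by
            rw [Finset.sum_const, Finset.card_univ, Fintype.card_fin, nsmul_eq_mul]
        _ = Real.sqrt d * (we T) ^ 2 := by
            rw [Real.sqrt_mul (by positivity), Real.sqrt_sq (sq_nonneg _)]
        _ ≤ d * (we T) ^ 2 := by
            refine mul_le_mul_of_nonneg_right ?_ (sq_nonneg _)
            rw [show ((d : ℝ)) = Real.sqrt ((d : ℝ) ^ 2) from (Real.sqrt_sq (by positivity)).symm]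
            apply Real.sqrt_le_sqrt
            rw [Real.sqrt_sq (by positivity)]
            exact_mod_cast Nat.le_self_pow two_ne_zero d
    · positivity
  rcases Nat.eq_zero_or_pos d with hd | hd
  · subst hd
    simp only [Nat.cast_zero, div_zero, zero_mul]
    positivity
  · have hd' : (0 : ℝ) < d := by exact_mod_cast hd
    rw [one_div, inv_mul_le_iff₀ hd']
    exact hle.trans_eq (by ring)
end

section
/- If T = (T_1,...,T_d) is a d-tuple of normal operators on a complex Hilbert space, then ||T²|| = ||(T_1*T_1,...,T_d*T_d)|| ≤ ||T||² = ||T*||² ≤ √d·||T²||, where T² = (T_1²,...,T_d²) and T* = (T_1*,...,T_d*). -/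
section Aux

variable {H : Type*} [NormedAddCommGroup H] [InnerProductSpace ℂ H] {d : ℕ}

lemma jnorm_bddAbove (T : Fin d → H →L[ℂ] H) :
    BddAbove {r | ∃ x : H, ‖x‖ = 1 ∧ r = Real.sqrt (∑ k, ‖T k x‖ ^ 2)} := by
  refine ⟨Real.sqrt (∑ k, ‖T k‖ ^ 2), ?_⟩
  rintro r ⟨x, hx, rfl⟩
  apply Real.sqrt_le_sqrt
  refine Finset.sum_le_sum fun k _ => ?_
  have h := (T k).le_opNorm x
  rw [hx, mul_one] at h
  exact pow_le_pow_left₀ (norm_nonneg _) h 2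

lemma jnorm_nonneg (T : Fin d → H →L[ℂ] H) : 0 ≤ jnorm T :=
  Real.sSup_nonneg (by rintro r ⟨x, hx, rfl⟩; exact Real.sqrt_nonneg _)

lemma le_jnorm (T : Fin d → H →L[ℂ] H) {x : H} (hx : ‖x‖ = 1) :
    Real.sqrt (∑ k, ‖T k x‖ ^ 2) ≤ jnorm T :=
  le_csSup (jnorm_bddAbove T) ⟨x, hx, rfl⟩

lemma jnorm_le (T : Fin d → H →L[ℂ] H) {c : ℝ} (hc : 0 ≤ c)
    (h : ∀ x : H, ‖x‖ = 1 → Real.sqrt (∑ k, ‖T k x‖ ^ 2) ≤ c) : jnorm T ≤ c :=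
  Real.sSup_le (by rintro r ⟨x, hx, rfl⟩; exact h x hx) hc

lemma jnorm_congr (S T : Fin d → H →L[ℂ] H) (h : ∀ k x, ‖S k x‖ = ‖T k x‖) :
    jnorm S = jnorm T := by
  unfold jnorm
  congr 1
  ext r
  constructor <;> rintro ⟨x, hx, rfl⟩ <;> exact ⟨x, hx, by simp [h]⟩

lemma apply_le_jnorm (T : Fin d → H →L[ℂ] H) (k : Fin d) (y : H) :
    ‖T k y‖ ≤ jnorm T * ‖y‖ := by
  rcases eq_or_ne y 0 with rfl | hy
  · simp
  · have hny : ‖y‖ ≠ 0 := norm_ne_zero_iff.mpr hy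
    have hu : ‖(‖y‖⁻¹ : ℂ) • y‖ = 1 := by
      simp [norm_smul, inv_mul_cancel₀ hny]
    have h1 : ‖T k ((‖y‖⁻¹ : ℂ) • y)‖ ≤ Real.sqrt (∑ j, ‖T j ((‖y‖⁻¹ : ℂ) • y)‖ ^ 2) := by
      rw [show ‖T k ((‖y‖⁻¹ : ℂ) • y)‖ = Real.sqrt (‖T k ((‖y‖⁻¹ : ℂ) • y)‖ ^ 2) from
        (Real.sqrt_sq (norm_nonneg _)).symm]
      exact Real.sqrt_le_sqrt (Finset.single_le_sum
        (f := fun j => ‖T j ((‖y‖⁻¹ : ℂ) • y)‖ ^ 2) (fun j _ => sq_nonneg _) (Finset.mem_univ k))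
    have h2 := h1.trans (le_jnorm T hu)
    have h3 : ‖T k ((‖y‖⁻¹ : ℂ) • y)‖ = ‖y‖⁻¹ * ‖T k y‖ := by
      rw [map_smul, norm_smul]; simp
    rw [h3] at h2
    calc ‖T k y‖ = ‖y‖ * (‖y‖⁻¹ * ‖T k y‖) := by field_simp
    _ ≤ ‖y‖ * jnorm T := by
        exact mul_le_mul_of_nonneg_left h2 (norm_nonneg _)
    _ = jnorm T * ‖y‖ := mul_comm _ _

variable [CompleteSpace H]

lemma norm_adjoint_apply (A : H →L[ℂ] H)
    (hA : (ContinuousLinearMap.adjoint A).comp A = A.comp (ContinuousLinearMap.adjoint A))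
    (x : H) : ‖ContinuousLinearMap.adjoint A x‖ = ‖A x‖ := by
  have h1 : (inner ℂ (ContinuousLinearMap.adjoint A x) (ContinuousLinearMap.adjoint A x) : ℂ)
      = inner ℂ (A x) (A x) := by
    rw [ContinuousLinearMap.adjoint_inner_left]
    have h2 : A (ContinuousLinearMap.adjoint A x) = ContinuousLinearMap.adjoint A (A x) := by
      have := congrArg (fun B => B x) hA
      simpa using this.symm
    rw [h2, ContinuousLinearMap.adjoint_inner_right]
  have h3 : ‖ContinuousLinearMap.adjoint A x‖ ^ 2 = ‖A x‖ ^ 2 := by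
    rw [← @inner_self_eq_norm_sq ℂ, ← @inner_self_eq_norm_sq ℂ, h1]
  have := congrArg Real.sqrt h3
  rwa [Real.sqrt_sq (norm_nonneg _), Real.sqrt_sq (norm_nonneg _)] at this

end Aux

theorem stmt4 {H : Type*} [NormedAddCommGroup H] [InnerProductSpace ℂ H] [CompleteSpace H] {d : ℕ} (T : Fin d → H →L[ℂ] H)
    (hN : ∀ k, (ContinuousLinearMap.adjoint (T k)).comp (T k)
      = (T k).comp (ContinuousLinearMap.adjoint (T k))) :
    jnorm (fun k => (T k) ^ 2)
        = jnorm (fun k => (ContinuousLinearMap.adjoint (T k)).comp (T k)) ∧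
    jnorm (fun k => (ContinuousLinearMap.adjoint (T k)).comp (T k)) ≤ (jnorm T) ^ 2 ∧
    (jnorm T) ^ 2 = (jnorm (fun k => ContinuousLinearMap.adjoint (T k))) ^ 2 ∧
    (jnorm T) ^ 2 ≤ Real.sqrt d * jnorm (fun k => (T k) ^ 2) := by
  have hsq : ∀ k (x : H), ((T k) ^ 2) x = T k (T k x) := by
    intro k x; rw [pow_two]; rfl
  have hadj : ∀ k (y : H), ‖ContinuousLinearMap.adjoint (T k) y‖ = ‖T k y‖ :=
    fun k y => norm_adjoint_apply (T k) (hN k) y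
  refine ⟨?_, ?_, ?_, ?_⟩
  · refine jnorm_congr _ _ fun k x => ?_
    simp only [hsq, ContinuousLinearMap.comp_apply]
    exact (hadj k (T k x)).symm
  · refine jnorm_le _ (sq_nonneg _) fun x hx => ?_
    have h1 : ∀ k : Fin d, ‖(ContinuousLinearMap.adjoint (T k)).comp (T k) x‖ ^ 2
        ≤ (jnorm T) ^ 2 * ‖T k x‖ ^ 2 := by
      intro k
      have : ‖(ContinuousLinearMap.adjoint (T k)).comp (T k) x‖ = ‖T k (T k x)‖ := by
        simp only [ContinuousLinearMap.comp_apply]; exact hadj k (T k x)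
      rw [this, ← mul_pow]
      exact pow_le_pow_left₀ (norm_nonneg _) (apply_le_jnorm T k (T k x)) 2
    calc Real.sqrt (∑ k, ‖(fun k => (ContinuousLinearMap.adjoint (T k)).comp (T k)) k x‖ ^ 2)
        ≤ Real.sqrt (∑ k, (jnorm T) ^ 2 * ‖T k x‖ ^ 2) :=
          Real.sqrt_le_sqrt (Finset.sum_le_sum fun k _ => h1 k)
      _ = Real.sqrt ((jnorm T) ^ 2 * ∑ k, ‖T k x‖ ^ 2) := by rw [Finset.mul_sum]
      _ ≤ Real.sqrt ((jnorm T) ^ 2 * (jnorm T) ^ 2) := by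
          apply Real.sqrt_le_sqrt
          apply mul_le_mul_of_nonneg_left _ (sq_nonneg _)
          have h2 := le_jnorm T hx
          have h3 : ∑ k, ‖T k x‖ ^ 2 = Real.sqrt (∑ k, ‖T k x‖ ^ 2) ^ 2 :=
            (Real.sq_sqrt (Finset.sum_nonneg fun k _ => sq_nonneg _)).symm
          rw [h3]
          exact pow_le_pow_left₀ (Real.sqrt_nonneg _) h2 2
      _ = (jnorm T) ^ 2 := by
          rw [← pow_two, Real.sqrt_sq (sq_nonneg _)]
  · congr 1
    exact (jnorm_congr _ T fun k x => hadj k x).symm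
  · set C := Real.sqrt d * jnorm (fun k => (T k) ^ 2) with hC
    have hC0 : 0 ≤ C := mul_nonneg (Real.sqrt_nonneg _) (jnorm_nonneg _)
    have key : ∀ x : H, ‖x‖ = 1 → (∑ k, ‖T k x‖ ^ 2) ≤ C := by
      intro x hx
      have e1 : (∑ k, ‖T k x‖ ^ 2)
          = RCLike.re (inner ℂ (∑ k, ContinuousLinearMap.adjoint (T k) (T k x)) x : ℂ) := by
        rw [sum_inner, map_sum]
        refine Finset.sum_congr rfl fun k _ => ?_
        rw [ContinuousLinearMap.adjoint_inner_left, inner_self_eq_norm_sq]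
      have e2 : RCLike.re (inner ℂ (∑ k, ContinuousLinearMap.adjoint (T k) (T k x)) x : ℂ)
          ≤ ‖∑ k, ContinuousLinearMap.adjoint (T k) (T k x)‖ := by
        calc RCLike.re (inner ℂ (∑ k, ContinuousLinearMap.adjoint (T k) (T k x)) x : ℂ)
            ≤ ‖(inner ℂ (∑ k, ContinuousLinearMap.adjoint (T k) (T k x)) x : ℂ)‖ :=
              RCLike.re_le_norm _
          _ ≤ ‖∑ k, ContinuousLinearMap.adjoint (T k) (T k x)‖ * ‖x‖ :=
              norm_inner_le_norm _ _
          _ = _ := by rw [hx, mul_one]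
      have e3 : ‖∑ k, ContinuousLinearMap.adjoint (T k) (T k x)‖
          ≤ ∑ k, ‖((T k) ^ 2) x‖ := by
        refine (norm_sum_le _ _).trans (le_of_eq ?_)
        refine Finset.sum_congr rfl fun k _ => ?_
        rw [hadj, hsq]
      have e4 : (∑ k, ‖((T k) ^ 2) x‖) ≤ Real.sqrt d * Real.sqrt (∑ k, ‖((T k) ^ 2) x‖ ^ 2) := by
        have h5 : (∑ k, ‖((T k) ^ 2) x‖) ^ 2 ≤ d * ∑ k, ‖((T k) ^ 2) x‖ ^ 2 := by
          have := sq_sum_le_card_mul_sum_sq (s := Finset.univ)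
            (f := fun k : Fin d => ‖((T k) ^ 2) x‖)
          simpa using this
        have h6 : (∑ k, ‖((T k) ^ 2) x‖) = Real.sqrt ((∑ k, ‖((T k) ^ 2) x‖) ^ 2) :=
          (Real.sqrt_sq (Finset.sum_nonneg fun k _ => norm_nonneg _)).symm
        rw [h6, ← Real.sqrt_mul (Nat.cast_nonneg d)]
        exact Real.sqrt_le_sqrt h5
      have e5 : Real.sqrt (∑ k, ‖((T k) ^ 2) x‖ ^ 2) ≤ jnorm (fun k => (T k) ^ 2) :=
        le_jnorm (fun k => (T k) ^ 2) hx
      calc (∑ k, ‖T k x‖ ^ 2) ≤ ∑ k, ‖((T k) ^ 2) x‖ := e1 ▸ e2.trans e3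
        _ ≤ Real.sqrt d * Real.sqrt (∑ k, ‖((T k) ^ 2) x‖ ^ 2) := e4
        _ ≤ C := mul_le_mul_of_nonneg_left e5 (Real.sqrt_nonneg _)
    have hle : jnorm T ≤ Real.sqrt C := by
      refine jnorm_le T (Real.sqrt_nonneg _) fun x hx => ?_
      exact Real.sqrt_le_sqrt (key x hx)
    calc (jnorm T) ^ 2 ≤ Real.sqrt C ^ 2 := pow_le_pow_left₀ (jnorm_nonneg T) hle 2
      _ = C := Real.sq_sqrt hC0
end
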